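/- arXiv:0906.4353 — 2 statements merged into one kernel-verified Lean document; each statement's English description precedes it below -/
import Mathlib

section
/- Let r > 0 be a real number and set a_n = exp(n^r) for n ≥ 1. Then the sequence (a_n) is slowly increasing, i.e. (∑_{k=1}^n a_k²)/(∑_{k=1}^n a_k)² → 0 as n → ∞, if and only if r < 1. -/
/-!
For a nonnegative nondecreasing sequence with partial sums `S n`, the ratio
`(∑ a_k²) / S n ²` lies between `(a n / S n)²` and `a n / S n`, so being slowly increasing
means `a n / S n → 0`. For `a k = exp (k ^ r)`: if `r ≥ 1` then `(k + 1) ^ r ≥ k ^ r + 1`, so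
`a k ≤ a (k + 1) / e` and the partial sums stay below `a n / (1 - 1/e)`; if `r < 1` then
`(n + M) ^ r - n ^ r → 0` for each fixed `M`, so `S (n + M)` contains `M + 1` terms at least
`a (n + M) / e`, and `S n / a n → ∞`.
-/

open Filter Topology Finset

def SlowlyIncreasing (a : ℕ → ℝ) : Prop :=
  Tendsto (fun n => (∑ k ∈ Icc 1 n, a k ^ 2) / (∑ k ∈ Icc 1 n, a k) ^ 2) atTop (𝓝 0)

section SlowlyIncreasing

variable {a : ℕ → ℝ}

lemma sq_div_sum_le_sum_sq_div_sq_sum (n : ℕ) :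
    (a n / ∑ k ∈ Icc 1 n, a k) ^ 2 ≤
      (∑ k ∈ Icc 1 n, a k ^ 2) / (∑ k ∈ Icc 1 n, a k) ^ 2 := by
  rcases Nat.eq_zero_or_pos n with rfl | hn
  · simp
  rw [div_pow]
  gcongr
  exact single_le_sum (fun k _ => sq_nonneg (a k)) (mem_Icc.2 ⟨hn, le_rfl⟩)

lemma sum_sq_div_sq_sum_le_div_sum (ha : ∀ k, 0 ≤ a k) (hmono : Monotone a) (n : ℕ) :
    (∑ k ∈ Icc 1 n, a k ^ 2) / (∑ k ∈ Icc 1 n, a k) ^ 2 ≤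
      a n / ∑ k ∈ Icc 1 n, a k := by
  have hQ : ∑ k ∈ Icc 1 n, a k ^ 2 ≤ a n * ∑ k ∈ Icc 1 n, a k := by
    rw [mul_sum]
    refine sum_le_sum fun k hk => ?_
    rw [sq]
    exact mul_le_mul_of_nonneg_right (hmono (mem_Icc.1 hk).2) (ha k)
  calc (∑ k ∈ Icc 1 n, a k ^ 2) / (∑ k ∈ Icc 1 n, a k) ^ 2
      ≤ (a n * ∑ k ∈ Icc 1 n, a k) / (∑ k ∈ Icc 1 n, a k) ^ 2 := by gcongr
    _ = a n / ∑ k ∈ Icc 1 n, a k := by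
      rcases eq_or_ne (∑ k ∈ Icc 1 n, a k) 0 with h | h
      · simp [h]
      · field_simp

theorem slowlyIncreasing_iff_tendsto_div_sum (ha : ∀ k, 0 ≤ a k) (hmono : Monotone a) :
    SlowlyIncreasing a ↔ Tendsto (fun n => a n / ∑ k ∈ Icc 1 n, a k) atTop (𝓝 0) := by
  have hnonneg : ∀ n, 0 ≤ a n / ∑ k ∈ Icc 1 n, a k := fun n =>
    div_nonneg (ha n) (sum_nonneg fun k _ => ha k)
  constructor
  · intro h
    have hsqrt := h.sqrt
    rw [Real.sqrt_zero] at hsqrt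
    refine squeeze_zero hnonneg (fun n => ?_) hsqrt
    rw [← Real.sqrt_sq (hnonneg n)]
    exact Real.sqrt_le_sqrt (sq_div_sum_le_sum_sq_div_sq_sum n)
  · intro h
    refine squeeze_zero (fun n => ?_) (sum_sq_div_sq_sum_le_div_sum ha hmono) h
    exact (sq_nonneg _).trans (sq_div_sum_le_sum_sq_div_sq_sum n)

lemma mul_sum_Icc_le_of_le_mul_succ {q : ℝ} (h0 : 0 ≤ a 0) (h : ∀ k, a k ≤ q * a (k + 1))
    (n : ℕ) :
    (1 - q) * ∑ k ∈ Icc 1 n, a k ≤ a n := by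
  induction n with
  | zero => simpa using h0
  | succ n ih =>
    rw [sum_Icc_succ_top (by omega), mul_add]
    linarith [h n]

lemma not_slowlyIncreasing_of_le_mul_succ {q : ℝ} (hq : q < 1) (ha : ∀ k, 0 < a k)
    (hmono : Monotone a) (h : ∀ k, a k ≤ q * a (k + 1)) : ¬ SlowlyIncreasing a := by
  rw [slowlyIncreasing_iff_tendsto_div_sum (fun k => (ha k).le) hmono]
  intro hlim
  obtain ⟨n, hn, hlt⟩ :=
    ((eventually_ge_atTop 1).and (hlim.eventually_lt_const (sub_pos.2 hq))).exists
  have hS : 0 < ∑ k ∈ Icc 1 n, a k :=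
    sum_pos (fun k _ => ha k) ⟨n, mem_Icc.2 ⟨hn, le_rfl⟩⟩
  rw [div_lt_iff₀ hS] at hlt
  linarith [mul_sum_Icc_le_of_le_mul_succ (ha 0).le h n]

lemma succ_mul_le_sum_Icc (ha : ∀ k, 0 ≤ a k) (hmono : Monotone a) {n : ℕ} (hn : 1 ≤ n)
    (M : ℕ) : (M + 1) * a n ≤ ∑ k ∈ Icc 1 (n + M), a k := by
  have hcard : #(Icc n (n + M)) = M + 1 := by rw [Nat.card_Icc]; omega
  calc (M + 1) * a n = #(Icc n (n + M)) • a n := by rw [hcard, nsmul_eq_mul, Nat.cast_succ]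
    _ ≤ ∑ k ∈ Icc n (n + M), a k :=
      card_nsmul_le_sum _ _ _ fun k hk => hmono (mem_Icc.1 hk).1
    _ ≤ ∑ k ∈ Icc 1 (n + M), a k :=
      sum_le_sum_of_subset_of_nonneg (Icc_subset_Icc_left hn) fun k _ _ => ha k

theorem slowlyIncreasing_of_eventually_le_mul {C : ℝ} (ha : ∀ k, 0 < a k)
    (hmono : Monotone a) (h : ∀ M, ∀ᶠ n in atTop, a (n + M) ≤ C * a n) :
    SlowlyIncreasing a := by
  rw [slowlyIncreasing_iff_tendsto_div_sum (fun k => (ha k).le) hmono]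
  suffices Tendsto (fun n => (∑ k ∈ Icc 1 n, a k) / a n) atTop atTop by
    simpa only [Pi.inv_def, inv_div] using this.inv_tendsto_atTop
  refine tendsto_atTop.2 fun b => ?_
  obtain ⟨M, hM⟩ := exists_nat_ge (b * C)
  obtain ⟨N, hN⟩ := eventually_atTop.1 (h M)
  refine eventually_atTop.2 ⟨N + M + 1, fun m hm => ?_⟩
  obtain ⟨n, rfl⟩ : ∃ n, m = n + M := ⟨m - M, by omega⟩
  have hsum := succ_mul_le_sum_Icc (fun k => (ha k).le) hmono (by omega : 1 ≤ n) M
  rw [le_div_iff₀ (ha _)]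
  rcases le_or_gt b 0 with hb | hb
  · exact (mul_nonpos_of_nonpos_of_nonneg hb (ha _).le).trans
      (sum_nonneg fun k _ => (ha k).le)
  calc b * a (n + M) ≤ b * (C * a n) := by gcongr; exact hN n (by omega)
    _ ≤ (M + 1) * a n := by nlinarith [ha n]
    _ ≤ _ := hsum

end SlowlyIncreasing

lemma rpow_add_le_rpow_add_mul {p x y : ℝ} (hx : 0 < x) (hy : 0 ≤ y) (hp0 : 0 ≤ p)
    (hp1 : p ≤ 1) :
    (x + y) ^ p ≤ x ^ p + p * y * x ^ (p - 1) := by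
  have hbern := rpow_one_add_le_one_add_mul_self
    (by linarith [div_nonneg hy hx.le] : -1 ≤ y / x) hp0 hp1
  calc (x + y) ^ p = x ^ p * (1 + y / x) ^ p := by
        rw [← Real.mul_rpow hx.le (by positivity)]; congr 1; field_simp
    _ ≤ x ^ p * (1 + p * (y / x)) := by gcongr
    _ = x ^ p + p * y * x ^ (p - 1) := by
        rw [Real.rpow_sub_one hx.ne']; field_simp

lemma eventually_natCast_add_rpow_le_add_one {r : ℝ} (hr0 : 0 ≤ r) (hr1 : r < 1) (M : ℕ) :
    ∀ᶠ n : ℕ in atTop, ((n + M : ℕ) : ℝ) ^ r ≤ (n : ℝ) ^ r + 1 := by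
  have hlim : Tendsto (fun n : ℕ => r * M * (n : ℝ) ^ (r - 1)) atTop (𝓝 0) := by
    have := (tendsto_rpow_neg_atTop (sub_pos.2 hr1)).comp tendsto_natCast_atTop_atTop
    simpa [neg_sub] using this.const_mul (r * M)
  filter_upwards [hlim.eventually_le_const one_pos, eventually_gt_atTop 0] with n hsmall hn
  push_cast
  have := rpow_add_le_rpow_add_mul (Nat.cast_pos.2 hn) (Nat.cast_nonneg M) hr0 hr1.le
  linarith

/-- For `r > 0`, the sequence `a_n = exp(n^r)` is slowly increasing
if and only if `r < 1`. -/
theorem stmt_12 (r : ℝ) (hr : 0 < r) :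
    Tendsto (fun n : ℕ =>
        (∑ k ∈ Finset.Icc 1 n, (Real.exp ((k : ℝ) ^ r)) ^ 2) /
          (∑ k ∈ Finset.Icc 1 n, Real.exp ((k : ℝ) ^ r)) ^ 2)
      atTop (nhds 0) ↔ r < 1 := by
  set a : ℕ → ℝ := fun k => Real.exp ((k : ℝ) ^ r)
  have ha : ∀ k, 0 < a k := fun k => Real.exp_pos _
  have hmono : Monotone a := fun k n hkn =>
    Real.exp_le_exp.2 (Real.rpow_le_rpow k.cast_nonneg (Nat.cast_le.2 hkn) hr.le)
  change SlowlyIncreasing a ↔ r < 1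
  constructor
  · intro h
    by_contra! hr1
    refine not_slowlyIncreasing_of_le_mul_succ (q := Real.exp (-1))
      (Real.exp_lt_one_iff.2 (by norm_num)) ha hmono (fun k => ?_) h
    have := Real.add_rpow_le_rpow_add k.cast_nonneg zero_le_one hr1
    rw [Real.one_rpow] at this
    simp only [a, ← Real.exp_add, Nat.cast_add_one, Real.exp_le_exp]
    linarith
  · intro hr1
    refine slowlyIncreasing_of_eventually_le_mul (C := Real.exp 1) ha hmono fun M => ?_
    filter_upwards [eventually_natCast_add_rpow_le_add_one hr.le hr1 M] with n hn
    simp only [a, ← Real.exp_add, Real.exp_le_exp]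
    linarith
end

section
/- Set a_n = exp(√n) for n ≥ 1. Then the sequence (a_n) is slowly increasing, i.e. (∑_{k=1}^n a_k²)/(∑_{k=1}^n a_k)² → 0 as n → ∞, but the series ∑_{n≥1} a_n² / (∑_{k=1}^n a_k)² diverges to +∞. -/
/-!
Write `A n = ∑_{k ≤ n} exp √k`. Since `√n - √k ≥ (n - k) / (2√n)`, the terms of `A n` decay
geometrically from `k = n` downwards with ratio `exp (-1 / (2√n))`, so `A n ≤ 3 √n exp √n`;
conversely the last `⌊√n⌋` terms are all at least `exp (√n - 1)`. Thus `A n` is of order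
`√n exp √n`. The first claim follows from `∑ a_k² ≤ a_n A n`, giving a ratio at most
`a_n / A n ≤ e / ⌊√n⌋`; the second from `a_n² / (A n)² ≥ 1 / (9n)` and the divergence of the
harmonic series.
-/

open Filter Finset Real

theorem sub_le_two_sqrt_mul_sub_sqrt {x y : ℝ} (hx : 0 ≤ x) (hy : 0 ≤ y) :
    x - y ≤ 2 * √x * (√x - √y) := by
  nlinarith [sq_nonneg (√x - √y), sq_sqrt hx, sq_sqrt hy]

theorem sqrt_mul_sub_sqrt_le_sub {x y : ℝ} (hy : 0 ≤ y) (hyx : y ≤ x) :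
    √x * (√x - √y) ≤ x - y := by
  nlinarith [sqrt_le_sqrt hyx, sqrt_nonneg y, sq_sqrt hy, sq_sqrt (hy.trans hyx)]

theorem one_div_one_sub_exp_neg_le {x : ℝ} (hx : 0 < x) : 1 / (1 - exp (-x)) ≤ 1 + 1 / x := by
  have hexp : exp (-x) * (1 + x) ≤ 1 := by
    rw [exp_neg, inv_mul_le_one₀ (exp_pos x)]
    linarith [add_one_le_exp x]
  have : x / (1 + x) ≤ 1 - exp (-x) := by
    rw [div_le_iff₀ (by linarith)]
    linarith
  calc 1 / (1 - exp (-x)) ≤ 1 / (x / (1 + x)) := one_div_le_one_div_of_le (by positivity) this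
    _ = 1 + 1 / x := by field_simp; ring

theorem sum_Icc_pow_sub_le {r : ℝ} (h0 : 0 ≤ r) (h1 : r < 1) (n : ℕ) :
    ∑ k ∈ Icc 1 n, r ^ (n - k) ≤ 1 / (1 - r) :=
  calc ∑ k ∈ Icc 1 n, r ^ (n - k) ≤ ∑ k ∈ range (n + 1), r ^ (n - k) :=
        sum_le_sum_of_subset_of_nonneg (fun k hk => by simp at hk ⊢; omega)
          fun _ _ _ => pow_nonneg h0 _
    _ = ∑ k ∈ Ico 0 (n + 1), r ^ k := by
        simpa using sum_range_reflect (fun k => r ^ k) (n + 1)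
    _ ≤ 1 / (1 - r) := by simpa using geom_sum_Ico_le_of_lt_one (m := 0) (n := n + 1) h0 h1

theorem sum_sq_le_mul_sum {ι : Type*} {s : Finset ι} {f : ι → ℝ} {M : ℝ}
    (h0 : ∀ i ∈ s, 0 ≤ f i) (hM : ∀ i ∈ s, f i ≤ M) : ∑ i ∈ s, f i ^ 2 ≤ M * ∑ i ∈ s, f i := by
  rw [mul_sum]
  exact sum_le_sum fun i hi => by rw [sq]; exact mul_le_mul_of_nonneg_right (hM i hi) (h0 i hi)

theorem tendsto_natSqrt_atTop : Tendsto (fun n : ℕ => (Nat.sqrt n : ℝ)) atTop atTop :=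
  tendsto_natCast_atTop_atTop.comp <| tendsto_atTop_atTop.2 fun b =>
    ⟨b * b, fun _ hn => (Nat.sqrt_eq b).symm.le.trans (Nat.sqrt_le_sqrt hn)⟩

theorem tendsto_sum_Icc_one_atTop_of_not_summable {f : ℕ → ℝ} (hf : ∀ n, 0 ≤ f n)
    (h : ¬Summable f) : Tendsto (fun N => ∑ n ∈ Icc 1 N, f n) atTop atTop := by
  refine (tendsto_atTop_add_const_right _ (-f 0) <|
    ((not_summable_iff_tendsto_nat_atTop_of_nonneg hf).1 h).comp (tendsto_add_atTop_nat 1)).congr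
    fun N => ?_
  rw [Function.comp_apply, range_eq_Ico, sum_eq_sum_Ico_succ_bot (Nat.succ_pos N),
    zero_add, Nat.succ_eq_add_one, Ico_add_one_right_eq_Icc]
  ring

theorem sum_exp_sqrt_le_three_mul {n : ℕ} (hn : 1 ≤ n) :
    ∑ k ∈ Icc 1 n, exp √k ≤ 3 * √n * exp √n := by
  have hsn : 1 ≤ √(n : ℝ) := one_le_sqrt.2 (by exact_mod_cast hn)
  set r := exp (-(1 / (2 * √n)))
  have hterm : ∀ k ∈ Icc 1 n, exp √k ≤ exp √n * r ^ (n - k) := by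
    intro k hk
    have hkn := (mem_Icc.1 hk).2
    have hgap := sub_le_two_sqrt_mul_sub_sqrt (Nat.cast_nonneg n) (Nat.cast_nonneg k)
    have hdecay : (n - k : ℝ) * (1 / (2 * √n)) ≤ √n - √k := by
      rw [← div_eq_mul_one_div, div_le_iff₀ (by positivity)]
      linarith
    rw [← exp_nat_mul, ← exp_add, exp_le_exp, Nat.cast_sub hkn]
    linarith
  calc ∑ k ∈ Icc 1 n, exp √k ≤ ∑ k ∈ Icc 1 n, exp √n * r ^ (n - k) := sum_le_sum hterm
    _ = exp √n * ∑ k ∈ Icc 1 n, r ^ (n - k) := (mul_sum ..).symm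
    _ ≤ exp √n * (1 + 2 * √n) := by
        gcongr
        refine (sum_Icc_pow_sub_le (exp_pos _).le ?_ n).trans ?_
        · rw [exp_lt_one_iff, neg_lt_zero]; positivity
        · simpa using one_div_one_sub_exp_neg_le (x := 1 / (2 * √n)) (by positivity)
    _ ≤ 3 * √n * exp √n := by nlinarith [exp_pos √n]

theorem natSqrt_mul_exp_sqrt_sub_one_le_sum_exp_sqrt (n : ℕ) :
    Nat.sqrt n * exp (√n - 1) ≤ ∑ k ∈ Icc 1 n, exp √k := by
  set m := Nat.sqrt n
  have hm : (m : ℝ) ≤ √n := nat_sqrt_le_real_sqrt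
  have hmn : m ≤ n := Nat.sqrt_le_self n
  have hterm : ∀ k ∈ Icc (n - m + 1) n, exp (√n - 1) ≤ exp √k := by
    intro k hk
    obtain ⟨hlo, hkn⟩ := mem_Icc.1 hk
    have hnk : (n : ℝ) - k ≤ √n := by
      have : n ≤ k + m := by omega
      have : (n : ℝ) ≤ k + m := by exact_mod_cast this
      linarith
    have hsn : 1 ≤ √(n : ℝ) := one_le_sqrt.2 (by exact_mod_cast (by omega : 1 ≤ n))
    have hgap := sqrt_mul_sub_sqrt_le_sub (Nat.cast_nonneg k) (Nat.cast_le.2 hkn)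
    rw [exp_le_exp]
    nlinarith
  calc (m : ℝ) * exp (√n - 1) = ∑ k ∈ Icc (n - m + 1) n, exp (√n - 1) := by
        rw [sum_const, Nat.card_Icc, nsmul_eq_mul]; congr 2; omega
    _ ≤ ∑ k ∈ Icc (n - m + 1) n, exp √k := sum_le_sum hterm
    _ ≤ ∑ k ∈ Icc 1 n, exp √k :=
        sum_le_sum_of_subset_of_nonneg (fun k hk => by simp at hk ⊢; omega)
          fun _ _ _ => (exp_pos _).le

theorem sum_sq_exp_sqrt_div_sq_sum_le {n : ℕ} (hn : 1 ≤ n) :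
    (∑ k ∈ Icc 1 n, exp √k ^ 2) / (∑ k ∈ Icc 1 n, exp √k) ^ 2 ≤ exp 1 / Nat.sqrt n := by
  set A := ∑ k ∈ Icc 1 n, exp √k
  have hm : (0 : ℝ) < Nat.sqrt n := by exact_mod_cast Nat.sqrt_pos.2 hn
  have hA : Nat.sqrt n * exp (√n - 1) ≤ A := natSqrt_mul_exp_sqrt_sub_one_le_sum_exp_sqrt n
  have hA0 : 0 < A := lt_of_lt_of_le (by positivity) hA
  have hS : ∑ k ∈ Icc 1 n, exp √k ^ 2 ≤ exp √n * A :=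
    sum_sq_le_mul_sum (fun _ _ => (exp_pos _).le)
      fun k hk => exp_le_exp.2 (sqrt_le_sqrt (by exact_mod_cast (mem_Icc.1 hk).2))
  calc (∑ k ∈ Icc 1 n, exp √k ^ 2) / A ^ 2 ≤ exp √n * A / A ^ 2 := by gcongr
    _ = exp √n / A := by field_simp
    _ ≤ exp √n / (Nat.sqrt n * exp (√n - 1)) := by gcongr
    _ = exp 1 / Nat.sqrt n := by rw [exp_sub]; field_simp

theorem inv_nine_mul_inv_le_exp_sqrt_sq_div_sq_sum (n : ℕ) :
    (9 : ℝ)⁻¹ * (n : ℝ)⁻¹ ≤ exp √n ^ 2 / (∑ k ∈ Icc 1 n, exp √k) ^ 2 := by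
  obtain rfl | hn := Nat.eq_zero_or_pos n
  · simp -- both sides are junk zeros: `0⁻¹ = 0` and `x / 0 = 0`
  have hsn : 1 ≤ √(n : ℝ) := one_le_sqrt.2 (by exact_mod_cast hn)
  calc (9 : ℝ)⁻¹ * (n : ℝ)⁻¹ = exp √n ^ 2 / (3 * √n * exp √n) ^ 2 := by
        rw [mul_pow, mul_pow, sq_sqrt (Nat.cast_nonneg n)]; field_simp; ring
    _ ≤ exp √n ^ 2 / (∑ k ∈ Icc 1 n, exp √k) ^ 2 := by
        gcongr
        exact sum_exp_sqrt_le_three_mul hn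

/-- The sequence `a_n = exp(√n)` is slowly increasing, but the series
`∑_n a_n² / (∑_{k=1}^n a_k)²` diverges to `+∞`. -/
theorem stmt_13 :
    Tendsto (fun n : ℕ =>
        (∑ k ∈ Finset.Icc 1 n, (Real.exp (Real.sqrt (k : ℝ))) ^ 2) /
          (∑ k ∈ Finset.Icc 1 n, Real.exp (Real.sqrt (k : ℝ))) ^ 2)
      atTop (nhds 0) ∧
    Tendsto (fun N : ℕ => ∑ n ∈ Finset.Icc 1 N,
        (Real.exp (Real.sqrt (n : ℝ))) ^ 2 /
          (∑ k ∈ Finset.Icc 1 n, Real.exp (Real.sqrt (k : ℝ))) ^ 2)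
      atTop atTop := by
  constructor
  · refine squeeze_zero' (Eventually.of_forall fun n => by positivity)
      ((eventually_ge_atTop 1).mono fun n hn => sum_sq_exp_sqrt_div_sq_sum_le hn)
      (tendsto_const_nhds.div_atTop tendsto_natSqrt_atTop)
  · refine tendsto_sum_Icc_one_atTop_of_not_summable (fun n => by positivity) fun h => ?_
    have : Summable fun n : ℕ => (9 : ℝ)⁻¹ * (n : ℝ)⁻¹ :=
      h.of_nonneg_of_le (fun n => by positivity) inv_nine_mul_inv_le_exp_sqrt_sq_div_sq_sum
    exact not_summable_natCast_inv ((summable_mul_left_iff (by norm_num)).1 this)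
end
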